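/- arXiv:2506.17305 — 3 statements merged into one kernel-verified Lean document; each statement's English description precedes it below -/
import Mathlib

section
/- Let σ : ℝ → ℝ be continuously differentiable, fix discretisation points T_1, …, T_N ∈ ℝ^d and target values f_1, …, f_N ∈ ℝ, and for X = (w_0, w) ∈ ℝ × ℝ^d set dev_i(X) = σ(w·T_i + w_0) − f_i and F(X) = max_{1≤i≤N} |dev_i(X)|. Suppose X* = (w_0*, w*) is a local minimizer of F with F(X*) > 0, and let P = {i : dev_i(X*) = F(X*)}, N = {i : dev_i(X*) = −F(X*)}, and v_i = σ'(w*·T_i + w_0*)·(1, T_i) ∈ ℝ^{1+d}. Then there exist λ_i ≥ 0 for i ∈ P ∪ N with Σ_{i∈P∪N} λ_i = 1 and Σ_{i∈P} λ_i v_i = Σ_{i∈N} λ_i v_i. -/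
/-- The deviation at the `i`-th discretisation point for a neural network with no hidden
layer, parameters `X = (w₀, w)`: `dev_i(X) = σ(w ⬝ T_i + w₀) − f_i`. -/
noncomputable def dev0 {d N : ℕ} (σ : ℝ → ℝ) (T : Fin N → Fin d → ℝ) (f : Fin N → ℝ)
    (X : ℝ × (Fin d → ℝ)) (i : Fin N) : ℝ :=
  σ ((∑ k, X.2 k * T i k) + X.1) - f i

/-- The uniform (Chebyshev/max) loss `F(X) = max_{1 ≤ i ≤ N} |dev_i(X)|`. -/
noncomputable def unifLoss0 {d N : ℕ} [NeZero N] (σ : ℝ → ℝ) (T : Fin N → Fin d → ℝ)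
    (f : Fin N → ℝ) (X : ℝ × (Fin d → ℝ)) : ℝ :=
  Finset.univ.sup' Finset.univ_nonempty fun i => |dev0 σ T f X i|

/-- The vector `v_i = σ'(w ⬝ T_i + w₀) • (1, T_i) ∈ ℝ^{1+d}`. -/
noncomputable def vvec {d N : ℕ} (σ : ℝ → ℝ) (T : Fin N → Fin d → ℝ)
    (X : ℝ × (Fin d → ℝ)) (i : Fin N) : Fin (d + 1) → ℝ :=
  deriv σ ((∑ k, X.2 k * T i k) + X.1) • (Fin.cons 1 (T i) : Fin (d + 1) → ℝ)

/-! If no convex combination of the signed vectors `sign(dev_i) • v_i` over the active indices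
vanished, a separating hyperplane would give a parameter direction along which every active
`|dev_i|` strictly decreases to first order (its derivative is the pairing with
`sign(dev_i) • v_i`), while the inactive ones stay below the maximum by continuity. Moving slightly
along that direction would lower `F`, contradicting local minimality; the convex weights of `0`
are the multipliers. -/

open Filter Topology Finset Matrix

theorem HasDerivAt.eventually_lt_right_of_neg {g : ℝ → ℝ} {g' x : ℝ} (hg : HasDerivAt g g' x)
    (hneg : g' < 0) : ∀ᶠ t in 𝓝[>] x, g t < g x := by
  filter_upwards [nhdsGT_le_nhdsNE x
      ((hasDerivAt_iff_tendsto_slope.mp hg).eventually (eventually_lt_nhds hneg)),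
    self_mem_nhdsWithin] with t hslope (ht : x < t)
  exact (slope_neg_iff_of_le ht.le).mp hslope

theorem exists_active_deriv_nonneg_of_isLocalMin_sup' {ι : Type*} {s : Finset ι}
    (hs : s.Nonempty) {g : ι → ℝ → ℝ} {g' : ι → ℝ}
    (hmin : IsLocalMin (fun t => s.sup' hs (g · t)) 0) (hcont : ∀ i ∈ s, ContinuousAt (g i) 0)
    (hderiv : ∀ i ∈ s, g i 0 = s.sup' hs (g · 0) → HasDerivAt (g i) (g' i) 0) :
    ∃ i ∈ s, g i 0 = s.sup' hs (g · 0) ∧ 0 ≤ g' i := by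
  by_contra! hneg
  have hbelow : ∀ i ∈ s, ∀ᶠ t in 𝓝[>] 0, g i t < s.sup' hs (g · 0) := by
    intro i hi
    rcases (le_sup' (g · 0) hi).eq_or_lt with hactive | hinactive
    · rw [← hactive]
      exact (hderiv i hi hactive).eventually_lt_right_of_neg (hneg i hi hactive)
    · exact nhdsWithin_le_nhds ((hcont i hi).eventually (eventually_lt_nhds hinactive))
  have hsup_below : ∀ᶠ t in 𝓝[>] 0, s.sup' hs (g · t) < s.sup' hs (g · 0) := by
    filter_upwards [(eventually_all_finset s).mpr hbelow] with t ht
    exact (sup'_lt_iff hs).mpr ht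
  obtain ⟨t, hge, hlt⟩ := ((hmin.filter_mono nhdsWithin_le_nhds).and hsup_below).exists
  exact (hge.trans_lt hlt).false

theorem exists_weights_of_mem_convexHull_image {ι E : Type*} [AddCommGroup E] [Module ℝ E]
    {s : Finset ι} {e : ι → E} {x : E} (hx : x ∈ convexHull ℝ (e '' s)) :
    ∃ w : ι → ℝ, (∀ i ∈ s, 0 ≤ w i) ∧ ∑ i ∈ s, w i = 1 ∧ ∑ i ∈ s, w i • e i = x := by
  classical
  suffices convexHull ℝ (e '' s) ⊆
      {x | ∃ w : ι → ℝ, (∀ i ∈ s, 0 ≤ w i) ∧ ∑ i ∈ s, w i = 1 ∧ ∑ i ∈ s, w i • e i = x} from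
    this hx
  refine convexHull_min ?_ ?_
  · rintro _ ⟨i, hi : i ∈ s, rfl⟩
    exact ⟨Pi.single i 1, fun j _ =>
      (Pi.single_nonneg.mpr zero_le_one : (0 : ι → ℝ) ≤ Pi.single i 1) j, by simp [hi],
      by simp [Pi.single_apply, hi]⟩
  · rintro _ ⟨w, hw0, hw1, rfl⟩ _ ⟨w', hw0', hw1', rfl⟩ a b ha hb hab
    refine ⟨a • w + b • w', fun i hi => ?_, ?_, ?_⟩
    · simp only [Pi.add_apply, Pi.smul_apply, smul_eq_mul]
      exact add_nonneg (mul_nonneg ha (hw0 i hi)) (mul_nonneg hb (hw0' i hi))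
    · simp [sum_add_distrib, ← mul_sum, hw1, hw1', hab]
    · simp [add_smul, mul_smul, sum_add_distrib, ← smul_sum]

theorem zero_mem_convexHull_of_forall_exists_nonneg_dotProduct {ι m : Type*} [Fintype m]
    {s : Finset ι} {e : ι → m → ℝ} (h : ∀ y, ∃ i ∈ s, 0 ≤ e i ⬝ᵥ y) :
    (0 : m → ℝ) ∈ convexHull ℝ (e '' s) := by
  classical
  by_contra hnot
  obtain ⟨φ, u, hφ0, hφe⟩ := geometric_hahn_banach_point_closed (convex_convexHull ℝ _)
    ((s.finite_toSet.image e).isClosed_convexHull ℝ) hnot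
  obtain ⟨i, hi, hnonneg⟩ := h fun k => -φ (Pi.single k 1)
  have hφ : φ (e i) = ∑ k, e i k * φ (Pi.single k 1) := by
    conv_lhs => rw [pi_eq_sum_univ' (e i)]
    simp [map_sum, map_smul]
  have hlt := hφe _ (subset_convexHull ℝ _ ⟨i, hi, rfl⟩)
  simp only [dotProduct, mul_neg, sum_neg_distrib, ← hφ] at hnonneg
  simp only [map_zero] at hφ0
  linarith

section NoHiddenLayer

variable {d N : ℕ} {σ : ℝ → ℝ} (T : Fin N → Fin d → ℝ) (f : Fin N → ℝ) (X : ℝ × (Fin d → ℝ))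
  (i : Fin N) (y : Fin (d + 1) → ℝ)

theorem dev0_add_smul (t : ℝ) :
    dev0 σ T f (X + t • (y 0, Fin.tail y)) i =
      σ ((∑ k, X.2 k * T i k) + X.1 + t * ((Fin.cons 1 (T i) : Fin (d + 1) → ℝ) ⬝ᵥ y)) - f i := by
  have hsum : ∑ k, t * y k.succ * T i k = t * ∑ k, T i k * y k.succ := by
    rw [mul_sum]
    exact sum_congr rfl fun _ _ => by ring
  simp only [dev0, Prod.fst_add, Prod.snd_add, Prod.smul_mk, Pi.add_apply, Pi.smul_apply,
    smul_eq_mul, Fin.tail, add_mul, sum_add_distrib, hsum, dotProduct, Fin.sum_univ_succ,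
    Fin.cons_zero, Fin.cons_succ, one_mul]
  ring_nf

theorem hasDerivAt_dev0_add_smul (hσ : DifferentiableAt ℝ σ ((∑ k, X.2 k * T i k) + X.1)) :
    HasDerivAt (fun t : ℝ => dev0 σ T f (X + t • (y 0, Fin.tail y)) i) (vvec σ T X i ⬝ᵥ y) 0 := by
  simp_rw [dev0_add_smul]
  have harg := ((hasDerivAt_id (0 : ℝ)).mul_const
    ((Fin.cons 1 (T i) : Fin (d + 1) → ℝ) ⬝ᵥ y)).const_add ((∑ k, X.2 k * T i k) + X.1)
  simp only [id, one_mul] at harg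
  simpa [vvec, smul_dotProduct] using
    (hσ.hasDerivAt.comp_of_eq 0 harg (by simp)).sub_const (f i)

theorem exists_active_sign_mul_dotProduct_nonneg [NeZero N] (hσ : Differentiable ℝ σ)
    (hmin : IsLocalMin (unifLoss0 σ T f) X) (hpos : 0 < unifLoss0 σ T f X) :
    ∃ i, |dev0 σ T f X i| = unifLoss0 σ T f X ∧
      0 ≤ (SignType.sign (dev0 σ T f X i) : ℝ) * (vvec σ T X i ⬝ᵥ y) := by
  have hline (i : Fin N) := hasDerivAt_dev0_add_smul T f X i y (hσ _)
  have hmin' : IsLocalMin (fun t : ℝ => univ.sup' univ_nonempty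
      fun i => |dev0 σ T f (X + t • (y 0, Fin.tail y)) i|) 0 :=
    IsLocalMin.comp_continuous (f := unifLoss0 σ T f) (by simpa using hmin) (by fun_prop)
  obtain ⟨i, -, hactive, hderiv⟩ := exists_active_deriv_nonneg_of_isLocalMin_sup' univ_nonempty
    hmin' (g' := fun i => (SignType.sign (dev0 σ T f X i) : ℝ) * (vvec σ T X i ⬝ᵥ y))
    (fun i _ => (hline i).continuousAt.abs) fun i _ hactive => by
      have hactive' : |dev0 σ T f X i| = unifLoss0 σ T f X := by
        simpa [unifLoss0] using hactive
      have hne : dev0 σ T f X i ≠ 0 := abs_pos.mp (hactive' ▸ hpos)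
      exact (hasDerivAt_abs hne).comp_of_eq 0 (hline i) (by simp)
  exact ⟨i, by simpa [unifLoss0] using hactive, hderiv⟩

end NoHiddenLayer

theorem uniform_no_hidden_layer_necessary_condition_general (d N : ℕ) [NeZero N]
    (σ : ℝ → ℝ) (hσ : ContDiff ℝ 1 σ) (T : Fin N → Fin d → ℝ) (f : Fin N → ℝ)
    (Xs : ℝ × (Fin d → ℝ))
    (hmin : IsLocalMin (unifLoss0 σ T f) Xs)
    (hpos : 0 < unifLoss0 σ T f Xs)
    (P Np : Finset (Fin N))
    (hP : ∀ i, i ∈ P ↔ dev0 σ T f Xs i = unifLoss0 σ T f Xs)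
    (hNp : ∀ i, i ∈ Np ↔ dev0 σ T f Xs i = -unifLoss0 σ T f Xs) :
    ∃ lam : Fin N → ℝ, (∀ i ∈ P ∪ Np, 0 ≤ lam i) ∧
      (∑ i ∈ P ∪ Np, lam i) = 1 ∧
      (∑ i ∈ P, lam i • vvec σ T Xs i) = ∑ i ∈ Np, lam i • vvec σ T Xs i := by
  have hactive (i : Fin N) : i ∈ P ∪ Np ↔ |dev0 σ T f Xs i| = unifLoss0 σ T f Xs := by
    rw [mem_union, hP, hNp, abs_eq hpos.le]
  have hdisj : Disjoint P Np := disjoint_left.mpr fun {i} hiP hiNp => by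
    linarith [(hP i).mp hiP, (hNp i).mp hiNp]
  obtain ⟨lam, hlam_nonneg, hlam_sum, hlam_comb⟩ := exists_weights_of_mem_convexHull_image
    (zero_mem_convexHull_of_forall_exists_nonneg_dotProduct
      (s := P ∪ Np) (e := fun i => (SignType.sign (dev0 σ T f Xs i) : ℝ) • vvec σ T Xs i)
      fun y => by
        obtain ⟨i, hi, hnonneg⟩ := exists_active_sign_mul_dotProduct_nonneg T f Xs y
          (hσ.differentiable one_ne_zero) hmin hpos
        exact ⟨i, (hactive i).mpr hi, by rwa [smul_dotProduct, smul_eq_mul]⟩)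
  have hsign_P : ∀ i ∈ P, lam i • (SignType.sign (dev0 σ T f Xs i) : ℝ) • vvec σ T Xs i =
      lam i • vvec σ T Xs i := fun i hi => by simp [(hP i).mp hi, hpos]
  have hsign_Np : ∀ i ∈ Np, lam i • (SignType.sign (dev0 σ T f Xs i) : ℝ) • vvec σ T Xs i =
      -(lam i • vvec σ T Xs i) := fun i hi => by simp [(hNp i).mp hi, hpos]
  rw [sum_union hdisj, sum_congr rfl hsign_P, sum_congr rfl hsign_Np, sum_neg_distrib,
    add_neg_eq_zero] at hlam_comb
  exact ⟨lam, hlam_nonneg, hlam_sum, hlam_comb⟩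

/-- Necessary optimality condition for uniform-loss approximation, no hidden layer:
if `X* = (w₀*, w*)` is a local minimizer of `F` with `F(X*) > 0`, `P` the set of positive
maximal deviation points and `Np` the set of negative maximal deviation points,
then there are convex multipliers `λᵢ ≥ 0`, `∑_{i∈P∪Np} λᵢ = 1`, with
`∑_{i∈P} λᵢ vᵢ = ∑_{i∈Np} λᵢ vᵢ`. -/
theorem uniform_no_hidden_layer_necessary_condition (d N : ℕ) (hd : 0 < d) [NeZero N]
    (σ : ℝ → ℝ) (hσ : ContDiff ℝ 1 σ) (T : Fin N → Fin d → ℝ) (f : Fin N → ℝ)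
    (Xs : ℝ × (Fin d → ℝ))
    (hmin : IsLocalMin (unifLoss0 σ T f) Xs)
    (hpos : 0 < unifLoss0 σ T f Xs)
    (P Np : Finset (Fin N))
    (hP : ∀ i, i ∈ P ↔ dev0 σ T f Xs i = unifLoss0 σ T f Xs)
    (hNp : ∀ i, i ∈ Np ↔ dev0 σ T f Xs i = -unifLoss0 σ T f Xs) :
    ∃ lam : Fin N → ℝ, (∀ i ∈ P ∪ Np, 0 ≤ lam i) ∧
      (∑ i ∈ P ∪ Np, lam i) = 1 ∧
      (∑ i ∈ P, lam i • vvec σ T Xs i) = ∑ i ∈ Np, lam i • vvec σ T Xs i :=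
  uniform_no_hidden_layer_necessary_condition_general d N σ hσ T f Xs hmin hpos P Np hP hNp
end

section
/- Let σ : ℝ → ℝ be continuously differentiable, fix discretisation points T_1, …, T_N ∈ ℝ^d and target values f_1, …, f_N ∈ ℝ, and for X = (a_1, …, a_n, w^1, …, w^n, w_0^1, …, w_0^n) set dev_i(X) = Σ_{j=1}^n a_j σ(w^j·T_i + w_0^j) − f_i and G(X) = Σ_{i=1}^N |dev_i(X)|. Suppose X* is a local minimizer of G, let P = {i : dev_i(X*) > 0}, N = {i : dev_i(X*) < 0}, C = {i : dev_i(X*) = 0}, and let V_i ∈ ℝ^{n(1+d)+n} be the vector whose j-th block (j = 1, …, n) is a_j* σ'(w^{j*}·T_i + w_0^{j*})·(1, T_i) and whose final n entries are σ(w^{1*}·T_i + w_0^{1*}), …, σ(w^{n*}·T_i + w_0^{n*}), all evaluated at X*. Then Σ_{i∈P} V_i − Σ_{i∈N} V_i belongs to the Minkowski sum Q = Σ_{i∈C} co{V_i, −V_i}. -/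
/-- The deviation at the `i`-th discretisation point for a neural network with one hidden
layer of `n` nodes, parameters `X = (a, w, w₀)`:
`dev_i(X) = ∑_{j=1}^n a_j σ(w^j ⬝ T_i + w₀^j) − f_i`. -/
noncomputable def dev {d N n : ℕ} (σ : ℝ → ℝ) (T : Fin N → Fin d → ℝ) (f : Fin N → ℝ)
    (X : (Fin n → ℝ) × (Fin n → Fin d → ℝ) × (Fin n → ℝ)) (i : Fin N) : ℝ :=
  (∑ j, X.1 j * σ ((∑ k, X.2.1 j k * T i k) + X.2.2 j)) - f i

/-- The Manhattan (ℓ₁) loss `G(X) = ∑_{i=1}^N |dev_i(X)|`. -/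
noncomputable def manhattanLoss {d N n : ℕ} (σ : ℝ → ℝ) (T : Fin N → Fin d → ℝ)
    (f : Fin N → ℝ) (X : (Fin n → ℝ) × (Fin n → Fin d → ℝ) × (Fin n → ℝ)) : ℝ :=
  ∑ i, |dev σ T f X i|

/-- The vector `V_i ∈ ℝ^{n(1+d)+n}` (realized as `(Fin n → Fin (d+1) → ℝ) × (Fin n → ℝ)`):
the `j`-th block is `a_j σ'(w^j ⬝ T_i + w₀^j) • (1, T_i) ∈ ℝ^{1+d}` and the final `n`
entries are `σ(w^1 ⬝ T_i + w₀^1), …, σ(w^n ⬝ T_i + w₀^n)`. -/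
noncomputable def Vvec {d N n : ℕ} (σ : ℝ → ℝ) (T : Fin N → Fin d → ℝ)
    (X : (Fin n → ℝ) × (Fin n → Fin d → ℝ) × (Fin n → ℝ)) (i : Fin N) :
    (Fin n → Fin (d + 1) → ℝ) × (Fin n → ℝ) :=
  (fun j => (X.1 j * deriv σ ((∑ k, X.2.1 j k * T i k) + X.2.2 j)) •
      (Fin.cons 1 (T i) : Fin (d + 1) → ℝ),
   fun j => σ ((∑ k, X.2.1 j k * T i k) + X.2.2 j))

/-!
Moving the parameters along a direction `h`, each deviation `dev_i` changes at rate `φ (V_i)`,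
and every linear functional `φ` on the space of the `V_i` arises in this way. At a local
minimum the right derivative of `G` along `h`, which is
`∑_P φ (V_i) - ∑_N φ (V_i) + ∑_C |φ (V_i)|`, is nonnegative; applied to `-φ` this reads
`φ (∑_P V_i - ∑_N V_i) ≤ ∑_C |φ (V_i)| = max_Q φ`. As `Q` is compact and convex, Hahn–Banach
separation puts `∑_P V_i - ∑_N V_i` in `Q`.
-/

open Finset
open scoped Pointwise

theorem HasDerivAt.hasDerivWithinAt_Ioi_abs {g : ℝ → ℝ} {c x : ℝ} (hg : HasDerivAt g c x) :
    HasDerivWithinAt (fun t => |g t|) (if g x = 0 then |c| else SignType.sign (g x) * c)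
      (Set.Ioi x) x := by
  split_ifs with hx
  · rw [hasDerivWithinAt_iff_tendsto_slope' Set.self_notMem_Ioi]
    have hslope := (hasDerivAt_iff_tendsto_slope.mp hg).mono_left
      (nhdsWithin_mono x fun t (ht : x < t) => ht.ne')
    refine hslope.abs.congr' ?_
    filter_upwards [self_mem_nhdsWithin] with t (ht : x < t)
    rw [slope_def_field, slope_def_field, hx, abs_zero, sub_zero, sub_zero, abs_div,
      abs_of_pos (sub_pos.mpr ht)]
  · exact ((hasDerivAt_abs hx).comp x hg).hasDerivWithinAt

theorem IsLocalMin.hasDerivWithinAt_Ioi_nonneg {F : ℝ → ℝ} {a F' : ℝ} (h : IsLocalMin F a)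
    (hF : HasDerivWithinAt F F' (Set.Ioi a) a) : 0 ≤ F' := by
  simpa using (h.on (Set.Ioi a)).hasFDerivWithinAt_nonneg hF.hasFDerivWithinAt
    (one_mem_posTangentConeAt_iff_frequently.mpr
      (eventually_mem_nhdsWithin (a := a) (s := Set.Ioi a)).frequently)

theorem sum_ite_abs_sign_mul_eq {ι : Type*} [Fintype ι] (x c : ι → ℝ) (P N C : Finset ι)
    (hP : ∀ i, i ∈ P ↔ 0 < x i) (hN : ∀ i, i ∈ N ↔ x i < 0) (hC : ∀ i, i ∈ C ↔ x i = 0) :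
    ∑ i, (if x i = 0 then |c i| else SignType.sign (x i) * c i) =
      ∑ i ∈ P, c i - ∑ i ∈ N, c i + ∑ i ∈ C, |c i| := by
  classical
  have hsplit : ∀ i, (if x i = 0 then |c i| else SignType.sign (x i) * c i) =
      ((if i ∈ P then c i else 0) - if i ∈ N then c i else 0) + if i ∈ C then |c i| else 0 := by
    intro i
    rcases lt_trichotomy (x i) 0 with hneg | hzero | hpos
    · simp [hP, hN, hC, hneg, hneg.ne, hneg.not_gt]
    · simp [hP, hN, hC, hzero]
    · simp [hP, hN, hC, hpos, hpos.ne', hpos.not_gt]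
  simp only [hsplit, sum_add_distrib, sum_sub_distrib, sum_ite_mem, Finset.univ_inter]

theorem mem_sum_convexHull_pair_of_forall_le {E ι : Type*} [AddCommGroup E] [Module ℝ E]
    [TopologicalSpace E] [IsTopologicalAddGroup E] [ContinuousSMul ℝ E]
    [LocallyConvexSpace ℝ E] [T2Space E] (C : Finset ι) (v : ι → E) {w : E}
    (hw : ∀ φ : StrongDual ℝ E, φ w ≤ ∑ i ∈ C, |φ (v i)|) :
    w ∈ ∑ i ∈ C, convexHull ℝ {v i, -v i} := by
  classical
  have hQ : ∑ i ∈ C, convexHull ℝ {v i, -v i} =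
      convexHull ℝ ↑(∑ i ∈ C, ({v i, -v i} : Finset E)) := by
    rw [Finset.coe_sum, convexHull_sum]
    simp only [Finset.coe_pair]
  by_contra hwQ
  rw [hQ] at hwQ
  obtain ⟨φ, u, hφQ, hφw⟩ := geometric_hahn_banach_closed_point (convex_convexHull ℝ _)
    ((Finset.finite_toSet _).isCompact_convexHull ℝ).isClosed hwQ
  rw [← hQ] at hφQ
  set a : ι → E := fun i => if 0 ≤ φ (v i) then v i else -v i
  have haQ : ∑ i ∈ C, a i ∈ ∑ i ∈ C, convexHull ℝ {v i, -v i} :=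
    Set.finsetSum_mem_finsetSum _ _ _ fun i _ =>
      subset_convexHull ℝ _ (by by_cases h : 0 ≤ φ (v i) <;> simp [a, h])
  have hφa : φ (∑ i ∈ C, a i) = ∑ i ∈ C, |φ (v i)| := by
    rw [map_sum]
    refine sum_congr rfl fun i _ => ?_
    by_cases h : 0 ≤ φ (v i)
    · simp [a, h, abs_of_nonneg h]
    · simp [a, h, abs_of_neg (not_le.mp h)]
  linarith [hφQ _ haQ, hw φ]

def preactivation {d n : ℕ} (w : Fin n → Fin d → ℝ) (w₀ : Fin n → ℝ) (x : Fin d → ℝ)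
    (j : Fin n) : ℝ :=
  ∑ k, w j k * x k + w₀ j

theorem preactivation_add_smul {d n : ℕ} (w w' : Fin n → Fin d → ℝ) (w₀ w₀' : Fin n → ℝ)
    (x : Fin d → ℝ) (t : ℝ) (j : Fin n) :
    preactivation (w + t • w') (w₀ + t • w₀') x j =
      preactivation w w₀ x j + t * preactivation w' w₀' x j := by
  simp only [preactivation, Pi.add_apply, Pi.smul_apply, smul_eq_mul, add_mul,
    sum_add_distrib, mul_add, mul_sum, mul_assoc]
  ring

theorem hasDerivAt_dev_add_smul {d N n : ℕ} {σ : ℝ → ℝ} (hσ : Differentiable ℝ σ)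
    (T : Fin N → Fin d → ℝ) (f : Fin N → ℝ)
    (X h : (Fin n → ℝ) × (Fin n → Fin d → ℝ) × (Fin n → ℝ)) (i : Fin N) :
    HasDerivAt (fun t : ℝ => dev σ T f (X + t • h) i)
      (∑ j, (h.1 j * σ (preactivation X.2.1 X.2.2 (T i) j) +
        X.1 j * deriv σ (preactivation X.2.1 X.2.2 (T i) j) *
          preactivation h.2.1 h.2.2 (T i) j)) 0 := by
  show HasDerivAt (fun t => ∑ j, (X.1 j + t * h.1 j) *
      σ (preactivation (X.2.1 + t • h.2.1) (X.2.2 + t • h.2.2) (T i) j) - f i) _ 0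
  simp only [preactivation_add_smul]
  refine (HasDerivAt.fun_sum fun j _ => ?_).sub_const (f i)
  have hline : ∀ a b : ℝ, HasDerivAt (fun t : ℝ => a + t * b) b 0 := fun a b => by
    simpa using ((hasDerivAt_id (0 : ℝ)).mul_const b).const_add a
  set s := preactivation X.2.1 X.2.2 (T i) j
  set m := preactivation h.2.1 h.2.2 (T i) j
  have hσs : HasDerivAt (fun t => σ (s + t * m)) (deriv σ s * m) 0 :=
    (hσ s).hasDerivAt.comp_of_eq 0 (hline s m) (by simp)
  refine ((hline (X.1 j) (h.1 j)).fun_mul hσs).congr_deriv ?_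
  simp only [zero_mul, add_zero, add_right_inj]
  ring

theorem apply_prod_pi_eq_sum {ι κ F : Type*} [Fintype ι] [Fintype κ] [DecidableEq ι]
    [DecidableEq κ] [FunLike F ((ι → κ → ℝ) × (ι → ℝ)) ℝ]
    [LinearMapClass F ℝ ((ι → κ → ℝ) × (ι → ℝ)) ℝ] (φ : F) (u : ι → κ → ℝ) (v : ι → ℝ) :
    φ (u, v) = ∑ j, ∑ k, u j k * φ (Pi.single j (Pi.single k 1), 0) +
      ∑ j, v j * φ (0, Pi.single j 1) := by
  have hbasis : (u, v) =
      ∑ j, ∑ k, u j k • ((Pi.single j (Pi.single k 1) : ι → κ → ℝ), (0 : ι → ℝ)) +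
        ∑ j, v j • ((0 : ι → κ → ℝ), (Pi.single j 1 : ι → ℝ)) := by
    ext j <;> simp [Prod.fst_sum, Prod.snd_sum, Finset.sum_apply, Pi.single_apply]
  conv_lhs => rw [hbasis]
  simp only [map_add, map_sum, map_smul, smul_eq_mul]

def dualDirection {d n : ℕ} (φ : StrongDual ℝ ((Fin n → Fin (d + 1) → ℝ) × (Fin n → ℝ))) :
    (Fin n → ℝ) × (Fin n → Fin d → ℝ) × (Fin n → ℝ) :=
  (fun j => φ (0, Pi.single j 1), fun j k => φ (Pi.single j (Pi.single k.succ 1), 0),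
    fun j => φ (Pi.single j (Pi.single 0 1), 0))

theorem apply_Vvec {d N n : ℕ} (σ : ℝ → ℝ) (T : Fin N → Fin d → ℝ)
    (X : (Fin n → ℝ) × (Fin n → Fin d → ℝ) × (Fin n → ℝ)) (i : Fin N)
    (φ : StrongDual ℝ ((Fin n → Fin (d + 1) → ℝ) × (Fin n → ℝ))) :
    φ (Vvec σ T X i) = ∑ j, ((dualDirection φ).1 j * σ (preactivation X.2.1 X.2.2 (T i) j) +
        X.1 j * deriv σ (preactivation X.2.1 X.2.2 (T i) j) *
          preactivation (dualDirection φ).2.1 (dualDirection φ).2.2 (T i) j) := by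
  rw [Vvec, apply_prod_pi_eq_sum, ← sum_add_distrib]
  refine sum_congr rfl fun j _ => ?_
  simp only [Fin.sum_univ_succ, Fin.cons_zero, Fin.cons_succ, Pi.smul_apply, smul_eq_mul,
    mul_one, dualDirection, preactivation, mul_add, mul_sum]
  simp only [← mul_assoc, mul_right_comm _ (T i _)]
  ring

theorem hasDerivAt_dev_add_smul_dualDirection {d N n : ℕ} {σ : ℝ → ℝ}
    (hσ : Differentiable ℝ σ) (T : Fin N → Fin d → ℝ) (f : Fin N → ℝ)
    (X : (Fin n → ℝ) × (Fin n → Fin d → ℝ) × (Fin n → ℝ)) (i : Fin N)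
    (φ : StrongDual ℝ ((Fin n → Fin (d + 1) → ℝ) × (Fin n → ℝ))) :
    HasDerivAt (fun t : ℝ => dev σ T f (X + t • dualDirection φ) i) (φ (Vvec σ T X i)) 0 := by
  rw [apply_Vvec]
  exact hasDerivAt_dev_add_smul hσ T f X _ i

theorem manhattan_one_hidden_layer_necessary_condition_general (d N n : ℕ)
    (σ : ℝ → ℝ) (hσ : ContDiff ℝ 1 σ) (T : Fin N → Fin d → ℝ) (f : Fin N → ℝ)
    (Xs : (Fin n → ℝ) × (Fin n → Fin d → ℝ) × (Fin n → ℝ))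
    (hmin : IsLocalMin (manhattanLoss σ T f) Xs)
    (P Np C : Finset (Fin N))
    (hP : ∀ i, i ∈ P ↔ 0 < dev σ T f Xs i)
    (hNp : ∀ i, i ∈ Np ↔ dev σ T f Xs i < 0)
    (hC : ∀ i, i ∈ C ↔ dev σ T f Xs i = 0) :
    (∑ i ∈ P, Vvec σ T Xs i) - (∑ i ∈ Np, Vvec σ T Xs i) ∈
      {x : (Fin n → Fin (d + 1) → ℝ) × (Fin n → ℝ) |
        ∃ a : Fin N → (Fin n → Fin (d + 1) → ℝ) × (Fin n → ℝ),
          (∀ i ∈ C, a i ∈ convexHull ℝ {Vvec σ T Xs i, -Vvec σ T Xs i}) ∧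
          x = ∑ i ∈ C, a i} := by
  suffices hφ : ∀ φ : StrongDual ℝ ((Fin n → Fin (d + 1) → ℝ) × (Fin n → ℝ)),
      φ ((∑ i ∈ P, Vvec σ T Xs i) - ∑ i ∈ Np, Vvec σ T Xs i) ≤
        ∑ i ∈ C, |φ (Vvec σ T Xs i)| by
    obtain ⟨a, ha, hsum⟩ :=
      (Set.mem_finsetSum _ _ _).mp (mem_sum_convexHull_pair_of_forall_le C _ hφ)
    exact ⟨a, fun i hi => ha hi, hsum.symm⟩
  intro φ
  set h := dualDirection (-φ)
  have hline : IsLocalMin (fun t : ℝ => ∑ i, |dev σ T f (Xs + t • h) i|) 0 :=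
    IsLocalMin.comp_continuous (f := manhattanLoss σ T f) (g := fun t : ℝ => Xs + t • h)
      (by simpa using hmin) (by fun_prop)
  have hright := hline.hasDerivWithinAt_Ioi_nonneg <|
    HasDerivWithinAt.fun_sum (u := univ) fun i _ =>
      (hasDerivAt_dev_add_smul_dualDirection (hσ.differentiable one_ne_zero) T f Xs i
        (-φ)).hasDerivWithinAt_Ioi_abs
  simp only [zero_smul, add_zero] at hright
  rw [sum_ite_abs_sign_mul_eq _ _ P Np C hP hNp hC] at hright
  simp only [map_sub, map_sum, neg_apply, sum_neg_distrib, abs_neg] at hright ⊢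
  linarith

/-- Necessary optimality condition for Manhattan (ℓ₁) loss approximation, one hidden
layer: if `X*` is a local minimizer of `G`, with `P`, `Np`, `C` the sets of indices with
positive, negative and zero deviation respectively, then
`∑_{i∈P} Vᵢ − ∑_{i∈Np} Vᵢ` belongs to the Minkowski sum `Q = ∑_{i∈C} co{Vᵢ, −Vᵢ}`. -/
theorem manhattan_one_hidden_layer_necessary_condition (d N n : ℕ) (hd : 0 < d) (hN : 0 < N)
    (hn : 0 < n) (σ : ℝ → ℝ) (hσ : ContDiff ℝ 1 σ) (T : Fin N → Fin d → ℝ) (f : Fin N → ℝ)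
    (Xs : (Fin n → ℝ) × (Fin n → Fin d → ℝ) × (Fin n → ℝ))
    (hmin : IsLocalMin (manhattanLoss σ T f) Xs)
    (P Np C : Finset (Fin N))
    (hP : ∀ i, i ∈ P ↔ 0 < dev σ T f Xs i)
    (hNp : ∀ i, i ∈ Np ↔ dev σ T f Xs i < 0)
    (hC : ∀ i, i ∈ C ↔ dev σ T f Xs i = 0) :
    (∑ i ∈ P, Vvec σ T Xs i) - (∑ i ∈ Np, Vvec σ T Xs i) ∈
      {x : (Fin n → Fin (d + 1) → ℝ) × (Fin n → ℝ) |
        ∃ a : Fin N → (Fin n → Fin (d + 1) → ℝ) × (Fin n → ℝ),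
          (∀ i ∈ C, a i ∈ convexHull ℝ {Vvec σ T Xs i, -Vvec σ T Xs i}) ∧
          x = ∑ i ∈ C, a i} :=
  manhattan_one_hidden_layer_necessary_condition_general d N n σ hσ T f Xs hmin P Np C hP hNp hC
end

section
/- Let σ : ℝ → ℝ be continuously differentiable, fix discretisation points T_1, …, T_N ∈ ℝ^d and target values f_1, …, f_N ∈ ℝ, and for X = (a_1, …, a_n, w^1, …, w^n, w_0^1, …, w_0^n) set dev_i(X) = Σ_{j=1}^n a_j σ(w^j·T_i + w_0^j) − f_i and G(X) = Σ_{i=1}^N |dev_i(X)|. Suppose X* is a local minimizer of G and dev_i(X*) ≠ 0 for every i = 1, …, N. Then, with P = {i : dev_i(X*) > 0}, N = {i : dev_i(X*) < 0}, and V_i ∈ ℝ^{n(1+d)+n} the vector whose j-th block (j = 1, …, n) is a_j* σ'(w^{j*}·T_i + w_0^{j*})·(1, T_i) and whose final n entries are σ(w^{1*}·T_i + w_0^{1*}), …, σ(w^{n*}·T_i + w_0^{n*}), all evaluated at X*, it holds that Σ_{i∈P} V_i = Σ_{i∈N} V_i. -/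
/-!
Where no deviation vanishes, each `|dev_i|` agrees near `X*` with `sign (dev_i X*) * dev_i`, so
`G` coincides locally with a differentiable function and its derivative at `X*` along every
direction `v` vanishes: `∑_{i∈P} ∂_v dev_i = ∑_{i∈N} ∂_v dev_i`. Along the coordinate directions
of `w₀^j`, `w^j_k` and `a_j` these directional derivatives are the coordinates of `V_i`.
-/

open Filter Topology Finset

theorem abs_eventuallyEq_sign_mul {X : Type*} [TopologicalSpace X] {g : X → ℝ} {x : X}
    (hg : ContinuousAt g x) (hx : g x ≠ 0) :
    (fun y => |g y|) =ᶠ[𝓝 x] fun y => SignType.sign (g x) * g y := by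
  have hsign : ∀ᶠ y in 𝓝 x, SignType.sign (g y) = SignType.sign (g x) :=
    ((continuousAt_sign_of_ne_zero hx).comp hg).eventually_mem
      ((isOpen_discrete {SignType.sign (g x)}).mem_nhds rfl)
  filter_upwards [hsign] with y hy
  rw [← hy, sign_mul_self]

theorem sum_sign_mul_eq_sum_pos_sub_sum_neg {ι : Type*} [Fintype ι] (v D : ι → ℝ) :
    ∑ i, SignType.sign (v i) * D i = ∑ i with 0 < v i, D i - ∑ i with v i < 0, D i := by
  rw [sum_filter, sum_filter, ← sum_sub_distrib]
  refine sum_congr rfl fun i _ => ?_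
  rcases lt_trichotomy (v i) 0 with h | h | h <;> simp [h, h.not_gt]

theorem IsLocalMin.sum_sign_mul_deriv_eq_zero_of_sum_abs {ι : Type*} [Fintype ι]
    {g : ι → ℝ → ℝ} {g' : ι → ℝ} {a : ℝ} (hmin : IsLocalMin (fun t => ∑ i, |g i t|) a)
    (hne : ∀ i, g i a ≠ 0) (hg : ∀ i, HasDerivAt (g i) (g' i) a) :
    ∑ i, SignType.sign (g i a) * g' i = 0 := by
  have hloc : (fun t => ∑ i, |g i t|) =ᶠ[𝓝 a] fun t => ∑ i, SignType.sign (g i a) * g i t := by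
    have := eventually_all.2 fun i => abs_eventuallyEq_sign_mul (hg i).continuousAt (hne i)
    filter_upwards [this] with t ht
    exact sum_congr rfl fun i _ => ht i
  exact (hmin.congr hloc).hasDerivAt_eq_zero (HasDerivAt.fun_sum fun i _ => (hg i).const_mul _)

theorem IsLocalMin.sum_pos_eq_sum_neg_of_sum_abs {ι E : Type*} [Fintype ι] [AddCommGroup E]
    [Module ℝ E] [TopologicalSpace E] [ContinuousAdd E] [ContinuousSMul ℝ E]
    {g : ι → E → ℝ} {g' : ι → ℝ} {x v : E} (hmin : IsLocalMin (fun y => ∑ i, |g i y|) x)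
    (hne : ∀ i, g i x ≠ 0) (hg : ∀ i, HasLineDerivAt ℝ (g i) (g' i) x v) :
    ∑ i with 0 < g i x, g' i = ∑ i with g i x < 0, g' i := by
  have hline : IsLocalMin ((fun y => ∑ i, |g i y|) ∘ fun t : ℝ => x + t • v) 0 :=
    IsLocalMin.comp_continuous (g := fun t : ℝ => x + t • v) (by simpa using hmin) (by fun_prop)
  have := hline.sum_sign_mul_deriv_eq_zero_of_sum_abs (by simpa using hne) hg
  rw [sum_sign_mul_eq_sum_pos_sub_sum_neg] at this
  simpa [sub_eq_zero] using this

theorem hasLineDerivAt_dev {d N n : ℕ} {σ : ℝ → ℝ} (hσ : Differentiable ℝ σ)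
    (T : Fin N → Fin d → ℝ) (f : Fin N → ℝ)
    (X v : (Fin n → ℝ) × (Fin n → Fin d → ℝ) × (Fin n → ℝ)) (i : Fin N) :
    HasLineDerivAt ℝ (fun Y => dev σ T f Y i)
      (∑ j, (v.1 j * σ ((∑ k, X.2.1 j k * T i k) + X.2.2 j) +
        X.1 j * deriv σ ((∑ k, X.2.1 j k * T i k) + X.2.2 j) *
          ((∑ k, v.2.1 j k * T i k) + v.2.2 j))) X v := by
  have hpre : ∀ (t : ℝ) j, (∑ k, (X.2.1 + t • v.2.1) j k * T i k) + (X.2.2 + t • v.2.2) j =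
      ((∑ k, X.2.1 j k * T i k) + X.2.2 j) + t * ((∑ k, v.2.1 j k * T i k) + v.2.2 j) := by
    intro t j
    simp only [Pi.add_apply, Pi.smul_apply, smul_eq_mul, add_mul, sum_add_distrib, mul_add,
      mul_sum, mul_assoc]
    ring
  show HasDerivAt (fun t : ℝ => dev σ T f (X + t • v) i) _ 0
  simp only [dev, Prod.fst_add, Prod.snd_add, Prod.smul_fst, Prod.smul_snd, hpre]
  refine (HasDerivAt.fun_sum fun j _ => ?_).sub_const _
  have hact := (hσ _).hasDerivAt.comp (0 : ℝ)
    ((hasDerivAt_mul_const ((∑ k, v.2.1 j k * T i k) + v.2.2 j)).const_add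
      ((∑ k, X.2.1 j k * T i k) + X.2.2 j))
  simpa [mul_assoc] using ((hasDerivAt_mul_const (v.1 j)).const_add (X.1 j)).fun_mul hact

theorem manhattan_one_hidden_layer_no_zero_deviation_general (d N n : ℕ)
    (σ : ℝ → ℝ) (hσ : ContDiff ℝ 1 σ) (T : Fin N → Fin d → ℝ) (f : Fin N → ℝ)
    (Xs : (Fin n → ℝ) × (Fin n → Fin d → ℝ) × (Fin n → ℝ))
    (hmin : IsLocalMin (manhattanLoss σ T f) Xs)
    (hne : ∀ i, dev σ T f Xs i ≠ 0)
    (P Np : Finset (Fin N))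
    (hP : ∀ i, i ∈ P ↔ 0 < dev σ T f Xs i)
    (hNp : ∀ i, i ∈ Np ↔ dev σ T f Xs i < 0) :
    (∑ i ∈ P, Vvec σ T Xs i) = ∑ i ∈ Np, Vvec σ T Xs i := by
  obtain rfl : P = ({i | 0 < dev σ T f Xs i} : Finset _) := by ext i; simp [hP]
  obtain rfl : Np = ({i | dev σ T f Xs i < 0} : Finset _) := by ext i; simp [hNp]
  have hbalance := fun v =>
    IsLocalMin.sum_pos_eq_sum_neg_of_sum_abs (g := fun i X => dev σ T f X i) hmin hne fun i =>
      hasLineDerivAt_dev (hσ.differentiable one_ne_zero) T f Xs v i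
  refine Prod.ext (funext fun j => funext fun m => ?_) (funext fun j => ?_) <;>
    simp only [Prod.fst_sum, Prod.snd_sum, Finset.sum_apply]
  · induction m using Fin.cases with
    | zero => simpa [Vvec, Pi.single_apply] using hbalance (0, 0, Pi.single j 1)
    | succ k =>
      simpa [Vvec, Pi.single_apply, ite_apply] using hbalance (0, Pi.single j (Pi.single k 1), 0)
  · simpa [Vvec, Pi.single_apply] using hbalance (Pi.single j 1, 0, 0)

/-- Simplified necessary optimality condition for Manhattan (ℓ₁) loss approximation, one
hidden layer, when no discretisation point has zero deviation: if `X*` is a local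
minimizer of `G` and `dev_i(X*) ≠ 0` for all `i`, then with `P` and `Np` the sets of
indices of positive resp. negative deviation, `∑_{i∈P} Vᵢ = ∑_{i∈Np} Vᵢ`. -/
theorem manhattan_one_hidden_layer_no_zero_deviation (d N n : ℕ) (hd : 0 < d) (hN : 0 < N)
    (hn : 0 < n) (σ : ℝ → ℝ) (hσ : ContDiff ℝ 1 σ) (T : Fin N → Fin d → ℝ) (f : Fin N → ℝ)
    (Xs : (Fin n → ℝ) × (Fin n → Fin d → ℝ) × (Fin n → ℝ))
    (hmin : IsLocalMin (manhattanLoss σ T f) Xs)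
    (hne : ∀ i, dev σ T f Xs i ≠ 0)
    (P Np : Finset (Fin N))
    (hP : ∀ i, i ∈ P ↔ 0 < dev σ T f Xs i)
    (hNp : ∀ i, i ∈ Np ↔ dev σ T f Xs i < 0) :
    (∑ i ∈ P, Vvec σ T Xs i) = ∑ i ∈ Np, Vvec σ T Xs i :=
  manhattan_one_hidden_layer_no_zero_deviation_general d N n σ hσ T f Xs hmin hne P Np hP hNp
end
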